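/- (Corollary: summed memory lens quantities lower-bound log memory capacity.) Fix a horizon H and a time t ≤ H. Let Z_1, …, Z_{t-1}, X_t, A_t be random variables on a common probability space, each taking values in a finite set, and suppose there exist K ∈ ℕ, a memory function g : {1,…,H} × 𝒵 × {1,…,K} → {1,…,K}, and memory states Y_0 = 1, Y_j = g(j, Z_j, Y_{j-1}) for 1 ≤ j ≤ t−1, such that the conditional distribution of A_t given (X_t, Z_{1:t-1}) coincides almost surely with that of A_t given (X_t, Y_{t-1}). Then ∑_{i=1}^{t-1} I(A_t; Z_i | X_t, Z_{i+1:t-1}) ≤ log K, where Z_{i+1:t-1} is the empty tuple when i = t−1. -/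

import Mathlib

open MeasureTheory ProbabilityTheory Real BigOperators

namespace MemoryLens

/-- Probability of an event as a real number. -/
noncomputable def pr {Ω : Type*} [MeasurableSpace Ω] (μ : Measure Ω) (s : Set Ω) : ℝ :=
  (μ s).toReal

/-- Conditional probability `P(s | t)` as a real number. -/
noncomputable def condProb {Ω : Type*} [MeasurableSpace Ω] (μ : Measure Ω) (s t : Set Ω) : ℝ :=
  pr μ (s ∩ t) / pr μ t

/-- Shannon entropy (in nats) of a finite-valued random variable. -/
noncomputable def entropy {Ω S : Type*} [MeasurableSpace Ω] [Fintype S]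
    (μ : Measure Ω) (X : Ω → S) : ℝ :=
  ∑ x : S, Real.negMulLog (pr μ {ω | X ω = x})

/-- Conditional entropy `H(X | W)` of finite-valued random variables. -/
noncomputable def condEntropy {Ω S T : Type*} [MeasurableSpace Ω] [Fintype S] [Fintype T]
    (μ : Measure Ω) (X : Ω → S) (W : Ω → T) : ℝ :=
  entropy μ (fun ω => (X ω, W ω)) - entropy μ W

/-- Conditional mutual information `I(A ; B | W)` of finite-valued random variables,
defined via the standard entropy decomposition. -/
noncomputable def condMI {Ω α β γ : Type*} [MeasurableSpace Ω] [Fintype α] [Fintype β] [Fintype γ]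
    (μ : Measure Ω) (A : Ω → α) (B : Ω → β) (W : Ω → γ) : ℝ :=
  entropy μ (fun ω => (A ω, W ω)) + entropy μ (fun ω => (B ω, W ω))
    - entropy μ (fun ω => (A ω, B ω, W ω)) - entropy μ W

/-- All fibers (level sets) of a random variable are measurable. -/
def MeasFibers {Ω α : Type*} [MeasurableSpace Ω] (A : Ω → α) : Prop :=
  ∀ a, MeasurableSet {ω | A ω = a}

/-- `memFold g y0 n (z_1, …, z_n)` is the memory state `Y_n` obtained by starting in `y0`
and applying the memory function `g` along observations `z_1, …, z_n`. -/
def memFold {𝒵 M : Type*} (g : ℕ → 𝒵 → M → M) (y0 : M) : (n : ℕ) → (Fin n → 𝒵) → M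
  | 0, _ => y0
  | n + 1, zs => g (n + 1) (zs (Fin.last n)) (memFold g y0 n (fun j => zs j.castSucc))

/-- The memory state `Y_n` as a random variable: the result of recursively updating the memory
via `g` along the observations `Z_1, …, Z_n`, starting from `Y_0 = y0`. -/
def memState {Ω 𝒵 M : Type*} (g : ℕ → 𝒵 → M → M) (Z : ℕ → Ω → 𝒵) (y0 : M) (n : ℕ) (ω : Ω) : M :=
  memFold g y0 n (fun j => Z (1 + (j : ℕ)) ω)

end MemoryLens

/-!
By the chain rule the summands telescope to `I(A_t; Z_{1:t-1} | X_t)`. The memory state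
`Y = Y_{t-1}` is a function of `Z_{1:t-1}`, and `A_t` is conditionally independent of `Z_{1:t-1}`
given `(X_t, Y)`, so `H(A_t | X_t, Z_{1:t-1}) = H(A_t | X_t, Y)`. Hence
`I(A_t; Z_{1:t-1} | X_t) = I(A_t; Y | X_t) ≤ H(Y | X_t) ≤ log K`.
-/

namespace MemoryLens

open Finset Function

section Fibers

variable {Ω α β : Type*}

lemma setOf_pair_eq (A : Ω → α) (B : Ω → β) (a : α) (b : β) :
    {ω | (A ω, B ω) = (a, b)} = {ω | A ω = a} ∩ {ω | B ω = b} := by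
  ext; simp

variable [MeasurableSpace Ω]

lemma MeasFibers.pair {A : Ω → α} {B : Ω → β} (hA : MeasFibers A) (hB : MeasFibers B) :
    MeasFibers fun ω => (A ω, B ω) := by
  rintro ⟨a, b⟩
  rw [setOf_pair_eq]
  exact (hA a).inter (hB b)

lemma MeasFibers.comp [Finite α] {A : Ω → α} (hA : MeasFibers A) (f : α → β) :
    MeasFibers fun ω => f (A ω) := by
  intro b
  have hunion : {ω | f (A ω) = b} = ⋃ a ∈ {a | f a = b}, {ω | A ω = a} := by ext; simp
  rw [hunion]
  exact .biUnion (Set.to_countable _) fun a _ => hA a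

lemma MeasFibers.pi {ι : Type*} [Finite ι] {V : Ω → ι → α}
    (hV : ∀ j, MeasFibers fun ω => V ω j) : MeasFibers V := by
  intro v
  have hinter : {ω | V ω = v} = ⋂ j, {ω | V ω j = v j} := by ext; simp [funext_iff]
  rw [hinter]
  exact .iInter fun j => hV j (v j)

end Fibers

section Probability

variable {Ω α β : Type*} [MeasurableSpace Ω] {μ : Measure Ω}

lemma pr_nonneg (s : Set Ω) : 0 ≤ pr μ s := ENNReal.toReal_nonneg

lemma pr_mono [IsFiniteMeasure μ] {s t : Set Ω} (h : s ⊆ t) : pr μ s ≤ pr μ t :=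
  measureReal_mono h

lemma sum_pr_fiber_inter [IsFiniteMeasure μ] [Fintype β] {B : Ω → β} (hB : MeasFibers B)
    {s : Set Ω} (hs : MeasurableSet s) : ∑ b, pr μ ({ω | B ω = b} ∩ s) = pr μ s := by
  have h := sum_measure_preimage_singleton (μ := μ.restrict s) univ (fun b _ => hB b)
  simp only [Measure.restrict_apply' hs, coe_univ, Set.preimage_univ, Set.univ_inter] at h
  rw [pr, ← h, ENNReal.toReal_sum fun b _ => measure_ne_top μ _]
  rfl

lemma sum_pr_fiber [IsProbabilityMeasure μ] [Fintype β] {B : Ω → β} (hB : MeasFibers B) :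
    ∑ b, pr μ {ω | B ω = b} = 1 := by
  simpa [pr] using sum_pr_fiber_inter (μ := μ) hB .univ

lemma condProb_nonneg (s t : Set Ω) : 0 ≤ condProb μ s t :=
  div_nonneg (pr_nonneg _) (pr_nonneg _)

lemma condProb_le_one [IsFiniteMeasure μ] (s t : Set Ω) : condProb μ s t ≤ 1 :=
  div_le_one_of_le₀ (pr_mono Set.inter_subset_right) (pr_nonneg _)

lemma pr_inter_eq_condProb_mul [IsFiniteMeasure μ] (s t : Set Ω) :
    pr μ (s ∩ t) = condProb μ s t * pr μ t := by
  rcases eq_or_ne (pr μ t) 0 with h | h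
  · rw [h, mul_zero]
    exact le_antisymm (h ▸ pr_mono Set.inter_subset_right) (pr_nonneg _)
  · exact (div_mul_cancel₀ _ h).symm

lemma sum_condProb_fiber [IsFiniteMeasure μ] [Fintype α] {A : Ω → α} (hA : MeasFibers A)
    {t : Set Ω} (ht : MeasurableSet t) (h : pr μ t ≠ 0) :
    ∑ a, condProb μ {ω | A ω = a} t = 1 := by
  simp_rw [condProb, ← sum_div, sum_pr_fiber_inter hA ht, div_self h]

end Probability

section Entropy

variable {Ω α γ S T : Type*} [MeasurableSpace Ω] {μ : Measure Ω}
  [Fintype α] [Fintype γ] [Fintype S] [Fintype T]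

lemma entropy_comp_of_injective (X : Ω → S) {f : S → T} (hf : Injective f) :
    entropy μ (fun ω => f (X ω)) = entropy μ X := by
  refine (Fintype.sum_of_injective f hf _ _ (fun y hy => ?_) fun x => ?_).symm
  · have hempty : {ω | f (X ω) = y} = ∅ :=
      Set.eq_empty_of_forall_notMem fun ω hω => hy ⟨X ω, hω⟩
    simp [hempty, pr]
  · simp only [hf.eq_iff]

lemma condEntropy_comp_of_injective (A : Ω → α) (W : Ω → S) {f : S → T} (hf : Injective f) :
    condEntropy μ A (fun ω => f (W ω)) = condEntropy μ A W := by
  unfold condEntropy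
  congr 1
  · exact entropy_comp_of_injective (fun ω => (A ω, W ω)) (injective_id.prodMap hf)
  · exact entropy_comp_of_injective W hf

lemma condMI_eq_condEntropy_sub (A : Ω → α) (B : Ω → S) (W : Ω → γ) :
    condMI μ A B W = condEntropy μ A W - condEntropy μ A (fun ω => (B ω, W ω)) := by
  unfold condMI condEntropy
  ring

lemma condEntropy_eq_sum [IsFiniteMeasure μ] {A : Ω → α} {C : Ω → S}
    (hA : MeasFibers A) (hC : MeasFibers C) :
    condEntropy μ A C = ∑ c, pr μ {ω | C ω = c} *
      ∑ a, negMulLog (condProb μ {ω | A ω = a} {ω | C ω = c}) := by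
  have hjoint : ∀ a c, negMulLog (pr μ {ω | (A ω, C ω) = (a, c)})
      = pr μ {ω | C ω = c} * negMulLog (condProb μ {ω | A ω = a} {ω | C ω = c})
        + condProb μ {ω | A ω = a} {ω | C ω = c} * negMulLog (pr μ {ω | C ω = c}) := by
    intro a c
    rw [setOf_pair_eq, pr_inter_eq_condProb_mul, negMulLog_mul]
  have hmass : ∀ c, (∑ a, condProb μ {ω | A ω = a} {ω | C ω = c})
      * negMulLog (pr μ {ω | C ω = c}) = negMulLog (pr μ {ω | C ω = c}) := by
    intro c
    rcases eq_or_ne (pr μ {ω | C ω = c}) 0 with h | h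
    · simp [h]
    · rw [sum_condProb_fiber hA (hC c) h, one_mul]
  unfold condEntropy entropy
  rw [Fintype.sum_prod_type, sum_comm]
  simp_rw [hjoint, sum_add_distrib, ← mul_sum, ← sum_mul, hmass]
  ring

lemma condEntropy_nonneg [IsFiniteMeasure μ] {A : Ω → α} {C : Ω → S}
    (hA : MeasFibers A) (hC : MeasFibers C) : 0 ≤ condEntropy μ A C := by
  rw [condEntropy_eq_sum hA hC]
  exact sum_nonneg fun c _ => mul_nonneg (pr_nonneg _) <| sum_nonneg fun a _ =>
    negMulLog_nonneg (condProb_nonneg _ _) (condProb_le_one _ _)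

lemma sum_negMulLog_le_log_card {ι : Type*} [Fintype ι] {q : ι → ℝ} (hq0 : ∀ i, 0 ≤ q i)
    (hq1 : ∑ i, q i = 1) : ∑ i, negMulLog (q i) ≤ log (Fintype.card ι) := by
  have : Nonempty ι := by
    by_contra h
    simp [not_nonempty_iff.mp h] at hq1
  set n : ℝ := (Fintype.card ι : ℝ)
  have hn : 0 < n := by simp [n, Fintype.card_pos]
  have hjensen := concaveOn_negMulLog.le_map_sum (t := univ) (w := fun _ => n⁻¹) (p := q)
    (fun _ _ => by positivity) (by simp [n, hn.ne']) (fun i _ => hq0 i)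
  simp only [smul_eq_mul, ← mul_sum, hq1, mul_one] at hjensen
  rw [negMulLog, log_inv, neg_mul_neg] at hjensen
  exact le_of_mul_le_mul_left hjensen (inv_pos.mpr hn)

lemma condEntropy_le_log_card [IsProbabilityMeasure μ] {A : Ω → α} {C : Ω → S}
    (hA : MeasFibers A) (hC : MeasFibers C) : condEntropy μ A C ≤ log (Fintype.card α) := by
  rw [condEntropy_eq_sum hA hC]
  calc ∑ c, pr μ {ω | C ω = c} * ∑ a, negMulLog (condProb μ {ω | A ω = a} {ω | C ω = c})
      ≤ ∑ c, pr μ {ω | C ω = c} * log (Fintype.card α) := by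
        refine sum_le_sum fun c _ => ?_
        rcases eq_or_ne (pr μ {ω | C ω = c}) 0 with h | h
        · simp [h]
        · exact mul_le_mul_of_nonneg_left (sum_negMulLog_le_log_card
            (fun a => condProb_nonneg _ _) (sum_condProb_fiber hA (hC c) h)) (pr_nonneg _)
    _ = log (Fintype.card α) := by rw [← sum_mul, sum_pr_fiber hC, one_mul]

lemma condEntropy_le_condEntropy_pair_add_log_card [IsProbabilityMeasure μ]
    {A : Ω → α} {X : Ω → γ} {Y : Ω → S} (hA : MeasFibers A) (hX : MeasFibers X)
    (hY : MeasFibers Y) :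
    condEntropy μ A X ≤ condEntropy μ A (fun ω => (X ω, Y ω)) + log (Fintype.card S) := by
  have hYAX := condEntropy_nonneg (μ := μ) hY (hA.pair hX)
  have hYX := condEntropy_le_log_card (μ := μ) hY hX
  have hassoc : entropy μ (fun ω => (A ω, X ω, Y ω)) = entropy μ (fun ω => (Y ω, A ω, X ω)) :=
    (entropy_comp_of_injective (fun ω => (Y ω, A ω, X ω)) (f := fun p => (p.2.1, p.2.2, p.1))
      fun p q h => by simp_all [Prod.ext_iff])
  have hswap : entropy μ (fun ω => (X ω, Y ω)) = entropy μ (fun ω => (Y ω, X ω)) :=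
    entropy_comp_of_injective (fun ω => (Y ω, X ω)) Prod.swap_injective
  unfold condEntropy at *
  linarith

lemma condEntropy_pair_eq_of_condProb_eq [IsFiniteMeasure μ] {A : Ω → α} {B : Ω → S}
    {W : Ω → γ} (hA : MeasFibers A) (hB : MeasFibers B) (hW : MeasFibers W)
    (h : ∀ a b w, pr μ {ω | (B ω, W ω) = (b, w)} ≠ 0 →
      condProb μ {ω | A ω = a} {ω | (B ω, W ω) = (b, w)}
        = condProb μ {ω | A ω = a} {ω | W ω = w}) :
    condEntropy μ A (fun ω => (B ω, W ω)) = condEntropy μ A W := by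
  rw [condEntropy_eq_sum hA (hB.pair hW), condEntropy_eq_sum hA hW, Fintype.sum_prod_type,
    sum_comm]
  refine sum_congr rfl fun w _ => ?_
  have hmarg : ∑ b, pr μ {ω | (B ω, W ω) = (b, w)} = pr μ {ω | W ω = w} := by
    simp_rw [setOf_pair_eq]
    exact sum_pr_fiber_inter hB (hW w)
  rw [← hmarg, sum_mul]
  refine sum_congr rfl fun b _ => ?_
  rcases eq_or_ne (pr μ {ω | (B ω, W ω) = (b, w)}) 0 with hp | hp
  · rw [hp, zero_mul, zero_mul]
  · simp_rw [h _ b w hp]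

end Entropy

section ChainRule

variable {Ω α γ 𝒵 : Type*}

/-- `window Z i m` is the tuple `Z_{i:i+m-1}`. -/
def window (Z : ℕ → Ω → 𝒵) (i m : ℕ) (ω : Ω) : Fin m → 𝒵 :=
  fun j => Z (i + j) ω

lemma window_succ (Z : ℕ → Ω → 𝒵) (i m : ℕ) (ω : Ω) :
    window Z i (m + 1) ω = Fin.cons (Z i ω) (window Z (i + 1) m ω) := by
  ext j
  refine Fin.cases ?_ (fun j => ?_) j
  · simp [window]
  · simp only [window, Fin.cons_succ, Fin.val_succ]
    rw [add_comm (j : ℕ) 1, add_assoc]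

variable [MeasurableSpace Ω] {μ : Measure Ω} [Fintype α] [Fintype γ] [Fintype 𝒵]

lemma condEntropy_cons_window (A : Ω → α) (W : Ω → γ) (Z : ℕ → Ω → 𝒵) (i m : ℕ) :
    condEntropy μ A (fun ω => (Z i ω, W ω, window Z (i + 1) m ω))
      = condEntropy μ A (fun ω => (W ω, window Z i (m + 1) ω)) := by
  simp_rw [window_succ]
  exact (condEntropy_comp_of_injective A (fun ω => (Z i ω, W ω, window Z (i + 1) m ω))
    (f := fun p : 𝒵 × γ × (Fin m → 𝒵) => (p.2.1, (Fin.cons p.1 p.2.2 : Fin (m + 1) → 𝒵)))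
    fun p q h => by simp_all [Prod.ext_iff]).symm

theorem sum_condMI_window_eq (A : Ω → α) (W : Ω → γ) (Z : ℕ → Ω → 𝒵) (n : ℕ) :
    ∑ i ∈ Icc 1 n, condMI μ A (Z i) (fun ω => (W ω, window Z (i + 1) (n - i) ω))
      = condMI μ A (window Z 1 n) W := by
  set G : ℕ → ℝ := fun i => condEntropy μ A (fun ω => (W ω, window Z i (n + 1 - i) ω))
  have hterm : ∀ i ∈ Icc 1 n,
      condMI μ A (Z i) (fun ω => (W ω, window Z (i + 1) (n - i) ω)) = G (i + 1) - G i := by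
    intro i hi
    have hlen : n + 1 - i = n - i + 1 := by grind
    simp only [G]
    rw [hlen, Nat.add_sub_add_right, condMI_eq_condEntropy_sub, condEntropy_cons_window]
  have hlast : G (n + 1) = condEntropy μ A W := by
    simp only [G]
    rw [Nat.sub_self]
    exact (condEntropy_comp_of_injective A (fun ω => (W ω, window Z (n + 1) 0 ω))
      Prod.fst_injective).symm
  have hfirst : G 1 = condEntropy μ A (fun ω => (window Z 1 n ω, W ω)) := by
    simp only [G]
    rw [Nat.add_sub_cancel]
    exact condEntropy_comp_of_injective A (fun ω => (window Z 1 n ω, W ω)) (f := Prod.swap)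
      Prod.swap_injective
  rw [sum_congr rfl hterm, ← Ico_add_one_right_eq_Icc, sum_Ico_sub G (by omega), hlast, hfirst,
    condMI_eq_condEntropy_sub]

end ChainRule

theorem condMI_le_log_card_of_condProb_eq {Ω α γ S M : Type*} [MeasurableSpace Ω]
    {μ : Measure Ω} [IsProbabilityMeasure μ] [Fintype α] [Fintype γ] [Fintype S] [Fintype M]
    {A : Ω → α} {X : Ω → γ} {V : Ω → S} (hA : MeasFibers A) (hX : MeasFibers X)
    (hV : MeasFibers V) (F : S → M)
    (hci : ∀ a x v, μ {ω | X ω = x ∧ V ω = v} ≠ 0 →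
      condProb μ {ω | A ω = a} {ω | X ω = x ∧ V ω = v}
        = condProb μ {ω | A ω = a} {ω | X ω = x ∧ F (V ω) = F v}) :
    condMI μ A V X ≤ log (Fintype.card M) := by
  have hY : MeasFibers fun ω => F (V ω) := hV.comp F
  have hindep : condEntropy μ A (fun ω => (V ω, X ω, F (V ω)))
      = condEntropy μ A (fun ω => (X ω, F (V ω))) := by
    refine condEntropy_pair_eq_of_condProb_eq hA hV (hX.pair hY) fun a v ⟨x, y⟩ hpos => ?_
    obtain rfl : F v = y := by
      contrapose! hpos
      have hempty : {ω | (V ω, X ω, F (V ω)) = (v, x, y)} = ∅ :=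
        Set.eq_empty_of_forall_notMem fun ω hω => hpos (by grind)
      rw [pr, hempty, measure_empty, ENNReal.toReal_zero]
    have hgraph : {ω | (V ω, X ω, F (V ω)) = (v, x, F v)} = {ω | X ω = x ∧ V ω = v} := by
      ext ω
      simp only [Set.mem_ofPred_eq, Prod.mk.injEq]
      constructor
      · rintro ⟨hv, hx, -⟩
        exact ⟨hx, hv⟩
      · rintro ⟨hx, rfl⟩
        exact ⟨rfl, hx, rfl⟩
    rw [hgraph] at hpos ⊢
    rw [hci a x v fun h => hpos (by simp [pr, h])]
    simp only [Prod.mk.injEq]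
  have hrelabel : condEntropy μ A (fun ω => (V ω, X ω, F (V ω)))
      = condEntropy μ A (fun ω => (V ω, X ω)) :=
    condEntropy_comp_of_injective A (fun ω => (V ω, X ω))
      (f := fun p : S × γ => (p.1, p.2, F p.1)) fun p q h => by simp_all [Prod.ext_iff]
  rw [condMI_eq_condEntropy_sub]
  linarith [condEntropy_le_condEntropy_pair_add_log_card (μ := μ) hA hX hY]

end MemoryLens

theorem memory_lens_corollary_sum_lower_bound_general
    {Ω α γ 𝒵 : Type*} [MeasurableSpace Ω]
    [Fintype α] [Fintype γ] [Fintype 𝒵]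
    (μ : MeasureTheory.Measure Ω) [MeasureTheory.IsProbabilityMeasure μ]
    (t : ℕ)
    (A : Ω → α) (X : Ω → γ) (Z : ℕ → Ω → 𝒵)
    (hA : MemoryLens.MeasFibers A) (hX : MemoryLens.MeasFibers X)
    (hZ : ∀ i, MemoryLens.MeasFibers (Z i))
    (K : ℕ) (hK : 0 < K) (g : ℕ → 𝒵 → Fin K → Fin K)
    (hci : ∀ (a : α) (x : γ) (zs : Fin (t - 1) → 𝒵),
      μ {ω | X ω = x ∧ (fun j : Fin (t - 1) => Z (1 + (j : ℕ)) ω) = zs} ≠ 0 →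
      MemoryLens.condProb μ {ω | A ω = a}
          {ω | X ω = x ∧ (fun j : Fin (t - 1) => Z (1 + (j : ℕ)) ω) = zs}
        = MemoryLens.condProb μ {ω | A ω = a}
          {ω | X ω = x ∧
            MemoryLens.memState g Z ⟨0, hK⟩ (t - 1) ω = MemoryLens.memFold g ⟨0, hK⟩ (t - 1) zs}) :
    ∑ i ∈ Finset.Icc 1 (t - 1),
      MemoryLens.condMI μ A (Z i)
        (fun ω => (X ω, fun j : Fin (t - 1 - i) => Z (i + 1 + (j : ℕ)) ω))
      ≤ Real.log K := by
  have hhistory : MemoryLens.MeasFibers (MemoryLens.window Z 1 (t - 1)) :=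
    MemoryLens.MeasFibers.pi fun j => hZ (1 + j)
  calc _ = MemoryLens.condMI μ A (MemoryLens.window Z 1 (t - 1)) X :=
        MemoryLens.sum_condMI_window_eq A X Z (t - 1)
    _ ≤ Real.log (Fintype.card (Fin K)) :=
        MemoryLens.condMI_le_log_card_of_condProb_eq hA hX hhistory
          (MemoryLens.memFold g ⟨0, hK⟩ (t - 1)) hci
    _ = Real.log K := by rw [Fintype.card_fin]

/-- Corollary. The summed memory lens quantities lower-bound the log of the
memory capacity: if `A_t` is conditionally independent of the history `Z_{1:t-1}` given
`(X_t, Y_{t-1})` for memory states generated by a memory function `g` with capacity `K`, then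
`∑_{i=1}^{t-1} I(A_t; Z_i | X_t, Z_{i+1:t-1}) ≤ log K`. -/
theorem memory_lens_corollary_sum_lower_bound
    {Ω α γ 𝒵 : Type*} [MeasurableSpace Ω]
    [Fintype α] [Fintype γ] [Fintype 𝒵]
    (μ : MeasureTheory.Measure Ω) [MeasureTheory.IsProbabilityMeasure μ]
    (H t : ℕ) (ht : t ≤ H) (ht1 : 1 ≤ t)
    (A : Ω → α) (X : Ω → γ) (Z : ℕ → Ω → 𝒵)
    (hA : MemoryLens.MeasFibers A) (hX : MemoryLens.MeasFibers X)
    (hZ : ∀ i, MemoryLens.MeasFibers (Z i))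
    (K : ℕ) (hK : 0 < K) (g : ℕ → 𝒵 → Fin K → Fin K)
    (hci : ∀ (a : α) (x : γ) (zs : Fin (t - 1) → 𝒵),
      μ {ω | X ω = x ∧ (fun j : Fin (t - 1) => Z (1 + (j : ℕ)) ω) = zs} ≠ 0 →
      MemoryLens.condProb μ {ω | A ω = a}
          {ω | X ω = x ∧ (fun j : Fin (t - 1) => Z (1 + (j : ℕ)) ω) = zs}
        = MemoryLens.condProb μ {ω | A ω = a}
          {ω | X ω = x ∧
            MemoryLens.memState g Z ⟨0, hK⟩ (t - 1) ω = MemoryLens.memFold g ⟨0, hK⟩ (t - 1) zs}) :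
    ∑ i ∈ Finset.Icc 1 (t - 1),
      MemoryLens.condMI μ A (Z i)
        (fun ω => (X ω, fun j : Fin (t - 1 - i) => Z (i + 1 + (j : ℕ)) ω))
      ≤ Real.log K :=
  memory_lens_corollary_sum_lower_bound_general μ t A X Z hA hX hZ K hK g hci
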